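/- Let x be an (L+1)-dimensional vector sorted in descending order and let x* be obtained from x by a balancing interchange of components l and s with l < s, x_l > x_s, x_l > x_a for all a > l, and x_s < x_b for all b < s. Then κ(x*) = κ(x) − 2(s − l) if x_l ≥ x_s + 2, and κ(x*) = κ(x) if x_l = x_s + 1. -/

import Mathlib

/-!
If `x l ≥ x s + 2`, the interchanged vector is still descending, and on descending vectors
`κ` is the linear form `∑ k, (L - 2k) x k`; moving one unit from position `l` to position `s`
therefore changes it by `(L - 2s) - (L - 2l)`. If `x l = x s + 1`, the interchange just swaps two
components, and `κ` only depends on the multiset of components.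
-/

open Finset

/-- The `k`-th largest component of `x` (0-indexed): descending sort. -/
def sortDesc {M : Nat} (x : Fin M → Nat) : Fin M → Nat :=
  fun k => x (Tuple.sort x k.rev)

/-- Imbalance index `κ(x) = Σ_{i<j} (x_[i] - x_[j])` over descending-sorted components. -/
def kappa {M : Nat} (x : Fin M → Nat) : Int :=
  ∑ i : Fin M, ∑ j : Fin M,
    if i < j then (sortDesc x i : Int) - (sortDesc x j : Int) else 0

/-- `y` is obtained from `x` by a balancing interchange at components `i, j`. -/
def BalInterchange {M : Nat} (x y : Fin M → Nat) (i j : Fin M) : Prop :=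
  i ≠ j ∧ x j + 1 ≤ x i ∧ y i = x i - 1 ∧ y j = x j + 1 ∧
    ∀ k, k ≠ i → k ≠ j → y k = x k

section

variable {M : ℕ}

theorem sortDesc_comp_perm (x : Fin M → ℕ) (σ : Equiv.Perm (Fin M)) :
    sortDesc (x ∘ σ) = sortDesc x :=
  funext fun k => congrFun (Tuple.comp_perm_comp_sort_eq_comp_sort (f := x) (σ := σ)) k.rev

theorem kappa_comp_perm (x : Fin M → ℕ) (σ : Equiv.Perm (Fin M)) :
    kappa (x ∘ σ) = kappa x := by
  simp only [kappa, sortDesc_comp_perm]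

theorem sortDesc_eq_self {x : Fin M → ℕ} (hx : Antitone x) : sortDesc x = x := by
  have hmono : Monotone (x ∘ Fin.revPerm) := fun i j hij => hx (Fin.rev_le_rev.2 hij)
  have hsort := Tuple.comp_perm_comp_sort_eq_comp_sort (f := x) (σ := Fin.revPerm)
  rw [(Tuple.sort_eq_refl_iff_monotone).2 hmono] at hsort
  funext k
  simpa [sortDesc] using (congrFun hsort k.rev).symm

theorem sum_ite_lt_sub_eq_sum_mul (f : Fin M → ℤ) :
    ∑ i, ∑ j, (if i < j then f i - f j else 0) =
      ∑ k, ((M : ℤ) - 1 - 2 * k) * f k := by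
  have hsplit : ∀ i j : Fin M, (if i < j then f i - f j else 0) =
      (if i < j then f i else 0) - (if i < j then f j else 0) := by
    intro i j; split_ifs <;> simp
  simp only [hsplit, sum_sub_distrib]
  rw [sum_comm (f := fun i j => if i < j then f j else 0), ← sum_sub_distrib]
  refine sum_congr rfl fun k _ => ?_
  rw [← sum_filter, ← sum_filter, sum_const, sum_const]
  have h1 : (univ.filter fun j => k < j) = Ioi k := by ext; simp
  have h2 : (univ.filter fun i => i < k) = Iio k := by ext; simp
  rw [h1, h2, Fin.card_Ioi, Fin.card_Iio, nsmul_eq_mul, nsmul_eq_mul]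
  have := k.isLt
  push_cast [show 1 + (k : ℕ) ≤ M by omega, Nat.sub_sub]
  ring

theorem kappa_of_antitone {x : Fin M → ℕ} (hx : Antitone x) :
    kappa x = ∑ k, ((M : ℤ) - 1 - 2 * k) * x k := by
  rw [kappa, sortDesc_eq_self hx, sum_ite_lt_sub_eq_sum_mul fun k => (x k : ℤ)]

theorem sum_mul_update_update (c : Fin M → ℤ) (x : Fin M → ℕ) {l s : Fin M} (hne : l ≠ s)
    (hl : 1 ≤ x l) :
    ∑ k, c k * (Function.update (Function.update x l (x l - 1)) s (x s + 1) k : ℤ) =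
      ∑ k, c k * x k - c l + c s := by
  have hy : ∀ k, (Function.update (Function.update x l (x l - 1)) s (x s + 1) k : ℤ) =
      x k - (if k = l then 1 else 0) + (if k = s then 1 else 0) := by
    intro k
    rcases eq_or_ne k s with rfl | hks
    · simp [hne.symm]
    rcases eq_or_ne k l with rfl | hkl
    · simp [hks]; omega
    · simp [hks, hkl]
  simp [hy, mul_add, mul_sub, sum_add_distrib, sum_sub_distrib]

theorem antitone_update_update {x : Fin M → ℕ} (hx : Antitone x) {l s : Fin M}
    (hl : ∀ a, l < a → x a < x l) (hs : ∀ b, b < s → x s < x b) (h2 : x s + 2 ≤ x l) :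
    Antitone (Function.update (Function.update x l (x l - 1)) s (x s + 1)) := by
  intro i j hij
  rcases eq_or_lt_of_le hij with rfl | hij
  · rfl
  have hxij := hx hij.le
  have hil : i = l → x j < x l := fun h => hl j (h ▸ hij)
  have hjs : j = s → x s < x i := fun h => hs i (h ▸ hij)
  simp only [Function.update_apply]
  split_ifs <;> subst_vars <;> (try simp only [true_implies] at *) <;> omega

theorem update_update_eq_comp_swap {x : Fin M → ℕ} {l s : Fin M} (h : x l = x s + 1) :
    Function.update (Function.update x l (x l - 1)) s (x s + 1) = x ∘ Equiv.swap l s := by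
  funext k
  simp only [Function.update_apply, Function.comp_apply, Equiv.swap_apply_def]
  split_ifs <;> subst_vars <;> omega

end

theorem stmt2 {L : Nat} (x : Fin (L + 1) → Nat) (hx : Antitone x)
    (l s : Fin (L + 1)) (hls : l < s) (hxls : x s < x l)
    (hl : ∀ a, l < a → x a < x l) (hs : ∀ b, b < s → x s < x b) :
    kappa (Function.update (Function.update x l (x l - 1)) s (x s + 1)) =
      kappa x - 2 * (((s : Nat) : Int) - ((l : Nat) : Int)) *
        (if x s + 2 ≤ x l then 1 else 0) := by
  by_cases h2 : x s + 2 ≤ x l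
  · rw [if_pos h2, kappa_of_antitone (antitone_update_update hx hl hs h2),
      kappa_of_antitone hx, sum_mul_update_update _ _ hls.ne (by omega)]
    ring
  · rw [if_neg h2, update_update_eq_comp_swap (by omega), kappa_comp_perm]
    ring
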